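/- arXiv:1305.5349 — 5 statements merged into one kernel-verified Lean document; each statement's English description precedes it below -/
import Mathlib

section
/- Let k be a field, K/k a field extension, and A a commutative local k-algebra that is finite dimensional as a k-vector space, with maximal ideal m_A. Let m be a maximal ideal of A ⊗_k K and let B be the localization of A ⊗_k K at m (a local Artinian K-algebra, corresponding to a connected component of Spec(A ⊗_k K)). Then length_B(B) = length_A(A) · length_B(B/m_A·B), where m_A·B denotes the ideal of B generated by the image of m_A, so that B/m_A·B is the local factor of (A/m_A) ⊗_k K corresponding to the same connected component. -/
/-!
`A → A ⊗[k] K → B` is flat, and it is a local homomorphism because every element of `m_A` is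
nilpotent (`A` is Artinian local). Base change along a flat local homomorphism multiplies lengths
by `length_B (B ⧸ m_A B)`, as one sees on a composition series of `A`, whose factors are all
`A ⧸ m_A`; apply this to the `A`-module `A`.
-/

open TensorProduct

noncomputable def moduleLength (R M : Type*) [Ring R] [AddCommGroup M] [Module R M] :
    WithBot ℕ∞ :=
  Order.krullDim (Submodule R M)

theorem IsLocalHom.of_krullDimLE_zero {R S : Type*} [CommRing R] [IsLocalRing R]
    [Ring.KrullDimLE 0 R] [Ring S] [Nontrivial S] (f : R →+* S) : IsLocalHom f where
  map_nonunit a ha := by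
    by_contra h
    exact ((Ring.KrullDimLE.isNilpotent_iff_mem_nonunits.mpr h).map f).not_isUnit ha

theorem IsLocalRing.length_self_eq_length_mul_length_quotient_map_maximalIdeal
    (A B : Type*) [CommRing A] [CommRing B] [IsLocalRing A] [IsLocalRing B] [Algebra A B]
    [IsLocalHom (algebraMap A B)] [Module.Flat A B] :
    Module.length B B =
      Module.length A A * Module.length B (B ⧸ (maximalIdeal A).map (algebraMap A B)) := by
  rw [← (AlgebraTensorModule.rid A B B).length_eq]
  exact length_baseChange A B A

/-- **Lemma A.3**: let `K/k` be a field extension, `A` a finite-dimensional local `k`-algebra,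
`m` a maximal ideal of `A ⊗[k] K` and `B` the localization of `A ⊗[k] K` at `m`. Then
`length_B B = length_A A · length_B (B / m_A·B)`. -/
theorem stmt2 (k K A : Type*) [Field k] [Field K] [Algebra k K]
    [CommRing A] [IsLocalRing A] [Algebra k A] [FiniteDimensional k A]
    (m : Ideal (A ⊗[k] K)) [m.IsMaximal] :
    moduleLength (Localization.AtPrime m) (Localization.AtPrime m) =
      moduleLength A A *
        moduleLength (Localization.AtPrime m)
          (Localization.AtPrime m ⧸
            Ideal.map
              ((algebraMap (A ⊗[k] K) (Localization.AtPrime m)).comp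
                (algebraMap A (A ⊗[k] K)))
              (IsLocalRing.maximalIdeal A)) := by
  let B := Localization.AtPrime m
  have : Module.Flat A B := Module.Flat.trans A (A ⊗[k] K) B
  have : IsArtinianRing A := isArtinian_of_tower k inferInstance
  have : IsLocalHom (algebraMap A B) := .of_krullDimLE_zero _
  simp only [moduleLength, ← Module.coe_length, ← WithBot.coe_mul, WithBot.coe_inj]
  exact IsLocalRing.length_self_eq_length_mul_length_quotient_map_maximalIdeal A B
end

section
/- Let C be a small category and let ρ, σ, τ be Grothendieck pretopologies on C such that every ρ-covering family and every σ-covering family is also a τ-covering family, and such that τ is ρ-then-σ refinable. Let F be a presheaf of sets (or of abelian groups) on C. If F is ρ-separated, then the sheafification of F with respect to the Grothendieck topology generated by σ is again ρ-separated, and hence is separated for the Grothendieck topology generated by τ. -/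
open CategoryTheory CategoryTheory.Limits

universe u

variable {C : Type u} [SmallCategory C] [HasPullbacks C]

/-- A pretopology `τ` is `ρ`-then-`σ` refinable if every `τ`-covering family admits a refinement
of the form `{V_{ij} → U_i → X}` where `{U_i → X}` is a `σ`-covering family and each
`{V_{ij} → U_i}` is a `ρ`-covering family; here a refinement of a covering family is a family
each member of which factors through some member of the original family. -/
def RefinableBy (τ ρ σ : Pretopology C) : Prop :=
  ∀ ⦃X : C⦄, ∀ T ∈ τ X, ∃ S ∈ σ X,
    ∃ R : ∀ ⦃Y : C⦄ ⦃f : Y ⟶ X⦄, S f → Presieve Y,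
      (∀ ⦃Y : C⦄ ⦃f : Y ⟶ X⦄ (hf : S f), R hf ∈ ρ Y) ∧
      (∀ ⦃Y : C⦄ (g : Y ⟶ X), Presieve.bind S R g → (Sieve.generate T).arrows g)

/-- A presheaf is separated for a pretopology if it is separated for each of its covering
families. -/
def PreSeparated (ρ : Pretopology C) (F : Cᵒᵖ ⥤ Type u) : Prop :=
  ∀ ⦃X : C⦄, ∀ R ∈ ρ X, Presieve.IsSeparatedFor F R

/-!
For a `ρ`-separated presheaf `F`, refinability turns sections agreeing on a `τ`-cover into
sections agreeing on a `σ`-cover: on each `U_i` they agree on the `ρ`-cover `{V_ij → U_i}`.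
This property passes along `F → F⁺`, the `σ`-sheafification, because that map is `σ`-locally
injective and surjective and `σ`-covers are `τ`-covers. In the sheaf `F⁺`, sections agreeing on
a `σ`-cover are equal; as `ρ`-covers and `τ`-covers are `τ`-covers, `F⁺` is separated for both.
-/

universe w

open Opposite

namespace CategoryTheory

section LocalEquality

variable {C : Type*} [Category C] {J K : GrothendieckTopology C}

namespace Presheaf

lemma equalizerSieve_pullback {F : Cᵒᵖ ⥤ Type w} {X Y : C} (x y : F.obj (op X)) (f : Y ⟶ X) :
    (equalizerSieve (F := F) x y).pullback f =
      equalizerSieve (F := F) (F.map f.op x) (F.map f.op y) := by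
  ext Z g
  simp

lemma equalizerSieve_le_equalizerSieve_app {F₁ F₂ : Cᵒᵖ ⥤ Type w} (φ : F₁ ⟶ F₂) {X : Cᵒᵖ}
    (x y : F₁.obj X) :
    equalizerSieve (F := F₁) x y ≤ equalizerSieve (F := F₂) (φ.app X x) (φ.app X y) := by
  intro Y f (h : F₁.map f.op x = F₁.map f.op y)
  change F₂.map f.op (φ.app X x) = F₂.map f.op (φ.app X y)
  rw [← NatTrans.naturality_apply, ← NatTrans.naturality_apply, h]

lemma isLocallyInjective_of_le (hJK : J ≤ K) {F₁ F₂ : Cᵒᵖ ⥤ Type w} (φ : F₁ ⟶ F₂)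
    [IsLocallyInjective J φ] : IsLocallyInjective K φ :=
  ⟨fun x y h => hJK _ (equalizerSieve_mem J φ x y h)⟩

lemma equalizerSieve_mem_of_isLocallySurjective (hJK : J ≤ K) {F₁ F₂ : Cᵒᵖ ⥤ Type w}
    (φ : F₁ ⟶ F₂) [IsLocallyInjective J φ] [IsLocallySurjective J φ]
    (hF₁ : ∀ ⦃Y : C⦄ (a b : F₁.obj (op Y)),
      equalizerSieve (F := F₁) a b ∈ K Y → equalizerSieve (F := F₁) a b ∈ J Y)
    {X : C} (s t : F₂.obj (op X)) (h : equalizerSieve (F := F₂) s t ∈ K X) :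
    equalizerSieve (F := F₂) s t ∈ J X := by
  have := isLocallyInjective_of_le hJK φ
  refine J.transitive (J.intersection_covering (imageSieve_mem J φ s) (imageSieve_mem J φ t)) _ ?_
  rintro Y f ⟨⟨a, ha⟩, ⟨b, hb⟩⟩
  rw [equalizerSieve_pullback, ← ha, ← hb]
  have hK : equalizerSieve (F := F₂) (φ.app _ a) (φ.app _ b) ∈ K Y := by
    rw [ha, hb, ← equalizerSieve_pullback]
    exact K.pullback_stable f h
  exact J.superset_covering (equalizerSieve_le_equalizerSieve_app φ a b)
    (hF₁ a b (equalizerSieve_mem_of_equalizerSieve_app_mem K φ a b hK))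

end Presheaf

lemma Presieve.isSeparatedFor_of_equalizerSieve_mem {P : Cᵒᵖ ⥤ Type w} {X : C}
    {R : Presieve X}
    (hP : ∀ s t : P.obj (op X), Presheaf.equalizerSieve (F := P) s t ∈ K X → s = t)
    (hR : Sieve.generate R ∈ K X) : Presieve.IsSeparatedFor P R := by
  intro x t₁ t₂ h₁ h₂
  refine hP t₁ t₂ (K.superset_covering ?_ hR)
  rw [Sieve.generate_le_iff]
  intro Y f hf
  exact (h₁ f hf).trans (h₂ f hf).symm

end LocalEquality

end CategoryTheory

open CategoryTheory.Presheaf in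
lemma equalizerSieve_mem_toGrothendieck_of_refinableBy {ρ σ τ : Pretopology C}
    {F : Cᵒᵖ ⥤ Type u} (hF : PreSeparated ρ F) (href : RefinableBy τ ρ σ) ⦃X : C⦄
    (x y : F.obj (op X)) (h : equalizerSieve (F := F) x y ∈ τ.toGrothendieck X) :
    equalizerSieve (F := F) x y ∈ σ.toGrothendieck X := by
  obtain ⟨T, hT, hTE⟩ := h
  obtain ⟨S, hS, R, hR, hRT⟩ := href T hT
  refine ⟨S, hS, fun U u hu => ?_⟩
  refine (hF (R hu) (hR hu)).ext fun V v hv => ?_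
  have : equalizerSieve (F := F) x y (v ≫ u) :=
    (Sieve.generate_le_iff _ _).2 hTE _ (hRT _ ⟨_, v, u, hu, hv, rfl⟩)
  simpa only [equalizerSieve_apply, op_comp, Functor.map_comp_apply] using this

/-- Let `ρ, σ, τ` be Grothendieck pretopologies with every `ρ`-cover and every `σ`-cover a
`τ`-cover, and `τ` `ρ`-then-`σ` refinable.  If a presheaf of sets `F` is `ρ`-separated, then its
sheafification for the topology generated by `σ` is again `ρ`-separated, and hence is separated
for the topology generated by `τ`. -/
theorem stmt5 (ρ σ τ : Pretopology C)
    (hρτ : ∀ ⦃X : C⦄ (R : Presieve X), R ∈ ρ X → R ∈ τ X)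
    (hστ : ∀ ⦃X : C⦄ (R : Presieve X), R ∈ σ X → R ∈ τ X)
    (href : RefinableBy τ ρ σ)
    (F : Cᵒᵖ ⥤ Type u) (hF : PreSeparated ρ F) :
    PreSeparated ρ ((Pretopology.toGrothendieck σ).sheafify F) ∧
    (∀ ⦃X : C⦄ (S : Sieve X), S ∈ Pretopology.toGrothendieck τ X →
      Presieve.IsSeparatedFor ((Pretopology.toGrothendieck σ).sheafify F) S.arrows) := by
  set J := σ.toGrothendieck
  have hsep : Presieve.IsSeparated J (J.sheafify F) :=
    ((isSheaf_iff_isSheaf_of_type J _).mp (J.sheafify_isSheaf F)).isSeparated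
  have hG : ∀ {X : C} (s t : (J.sheafify F).obj (op X)),
      Presheaf.equalizerSieve (F := J.sheafify F) s t ∈ τ.toGrothendieck X → s = t := fun s t h =>
    (hsep _ (Presheaf.equalizerSieve_mem_of_isLocallySurjective
      (Pretopology.toGrothendieck_mono (C := C) hστ) (J.toSheafify F)
      (equalizerSieve_mem_toGrothendieck_of_refinableBy hF href) s t h)).ext fun _ _ hf => hf
  refine ⟨fun X R hR => Presieve.isSeparatedFor_of_equalizerSieve_mem hG ?_,
    fun X S hS => Presieve.isSeparatedFor_of_equalizerSieve_mem hG ?_⟩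
  · exact Pretopology.toGrothendieck_mono (C := C) hρτ _ ⟨R, hR, Sieve.le_generate R⟩
  · rwa [Sieve.generate_sieve]
end

section
/- Let C be a small category and let ρ, σ, τ be Grothendieck pretopologies on C such that every ρ-covering family and every σ-covering family is also a τ-covering family, and such that τ is ρ-then-σ refinable. Let F be a presheaf of sets (or of abelian groups) on C. If F is a sheaf for every ρ-covering family and F is σ-separated, then the sheafification of F with respect to the Grothendieck topology generated by σ is a sheaf for the Grothendieck topology generated by τ; equivalently, the canonical morphism from the σ-sheafification of F to the τ-sheafification of F is an isomorphism. In particular, a presheaf that is a sheaf for every ρ-covering family and a sheaf for every σ-covering family is a sheaf for the topology generated by τ. -/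
/-!
Refinability puts every `τ`-covering sieve above the bind of a `σ`-cover with `ρ`-covers, so the
topology generated by `τ` lies below every topology containing those generated by `ρ` and `σ`;
applied to the finest topology for which `G` is a sheaf, this is the second claim.

For the first, the same refinement makes `F` separated for `τ`, so `F` injects into its
`τ`-sheafification `F⁺`. A section of `F⁺` lifts to `F` on a `τ`-cover, hence on the `ρ`-covers
of a `σ`-cover; since `F` is a `ρ`-sheaf and `F → F⁺` is injective these lifts glue, so
`F → F⁺` is `σ`-locally surjective. A `σ`-locally bijective map into the `σ`-sheaf `F⁺` exhibits
`F⁺` as the `σ`-sheafification of `F`.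
-/

open CategoryTheory CategoryTheory.Limits

universe u

variable {C : Type u} [SmallCategory C] [HasPullbacks C]

open Opposite

universe v w

namespace CategoryTheory

section

variable {C : Type u} [Category.{v} C] {F : Cᵒᵖ ⥤ Type w} {X : C}

lemma Presieve.IsSeparatedFor.mono {Q P : Presieve X} (hQP : Q ≤ P)
    (hQ : IsSeparatedFor F Q) : IsSeparatedFor F P :=
  fun x t₁ t₂ h₁ h₂ => hQ (x.restrict hQP) t₁ t₂ (fun _ _ hf => h₁ _ (hQP _ _ hf))
    (fun _ _ hf => h₂ _ (hQP _ _ hf))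

lemma Presieve.IsSeparatedFor.bind {S : Presieve X}
    {R : ∀ ⦃Y : C⦄ ⦃f : Y ⟶ X⦄, S f → Presieve Y} (hS : IsSeparatedFor F S)
    (hR : ∀ ⦃Y : C⦄ ⦃f : Y ⟶ X⦄ (hf : S f), IsSeparatedFor F (R hf)) :
    IsSeparatedFor F (S.bind R) := by
  intro x t₁ t₂ h₁ h₂
  refine hS.ext fun Y f hf => (hR hf).ext fun Z g hg => ?_
  simp only [← Functor.map_comp_apply, ← op_comp, h₁ _ (bind_comp f hf hg),
    h₂ _ (bind_comp f hf hg)]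

lemma Presheaf.exists_app_eq_of_le_imageSieve {G : Cᵒᵖ ⥤ Type w} (φ : F ⟶ G)
    (hφ : ∀ Y, Function.Injective (φ.app Y)) {R : Presieve X} (hF : Presieve.IsSheafFor F R)
    (hG : Presieve.IsSeparatedFor G R) (t : G.obj (op X)) (hR : R ≤ (imageSieve φ t).arrows) :
    ∃ s, φ.app _ s = t := by
  let x : Presieve.FamilyOfElements F R := fun _ g hg => localPreimage φ t g (hR _ _ hg)
  have hx : x.Compatible := by
    intro Y₁ Y₂ Z g₁ g₂ f₁ f₂ h₁ h₂ w
    apply hφ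
    simp only [x, NatTrans.naturality_apply, app_localPreimage, ← Functor.map_comp_apply,
      ← op_comp, w]
  refine ⟨hF.amalgamate x hx, hG.ext fun Y g hg => ?_⟩
  rw [← NatTrans.naturality_apply, hF.valid_glue hx g hg, app_localPreimage]

end

lemma GrothendieckTopology.isIso_sheafifyLift_of_isLocallyBijective {C : Type u} [Category.{v} C]
    {J : GrothendieckTopology C} {F G : Cᵒᵖ ⥤ Type (max u v)} (φ : F ⟶ G)
    (hG : Presheaf.IsSheaf J G) [Presheaf.IsLocallyInjective J φ]
    [Presheaf.IsLocallySurjective J φ] : IsIso (J.sheafifyLift φ hG) := by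
  let ψ : (⟨J.sheafify F, J.sheafify_isSheaf F⟩ : Sheaf J _) ⟶ ⟨G, hG⟩ := ⟨J.sheafifyLift φ hG⟩
  have fac : J.toSheafify F ≫ ψ.hom = φ := J.toSheafify_sheafifyLift φ hG
  have := Presheaf.isLocallySurjective_of_isLocallySurjective_fac J fac
  have := Presheaf.isLocallyInjective_of_isLocallyInjective_of_isLocallySurjective_fac J φ fac
  have : IsIso ψ := (Sheaf.isLocallyBijective_iff_isIso ψ).1 ⟨‹_›, ‹_›⟩
  exact inferInstanceAs (IsIso ((sheafToPresheaf J _).map ψ))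

end CategoryTheory

namespace RefinableBy

variable {ρ σ τ : Pretopology C}

lemma exists_bind_le (href : RefinableBy τ ρ σ) {X : C} {W : Sieve X}
    (hW : W ∈ τ.toGrothendieck X) :
    ∃ S ∈ σ X, ∃ R : ∀ ⦃Y : C⦄ ⦃f : Y ⟶ X⦄, S f → Presieve Y,
      (∀ ⦃Y : C⦄ ⦃f : Y ⟶ X⦄ (hf : S f), R hf ∈ ρ Y) ∧ S.bind R ≤ W.arrows := by
  obtain ⟨T, hT, hTW⟩ := hW
  obtain ⟨S, hS, R, hR, hbind⟩ := href T hT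
  exact ⟨S, hS, R, hR, fun _ g hg => (Sieve.generate_le_iff T W).2 hTW _ (hbind g hg)⟩

lemma toGrothendieck_le (href : RefinableBy τ ρ σ) {J : GrothendieckTopology C}
    (hρ : ρ.toGrothendieck ≤ J) (hσ : σ.toGrothendieck ≤ J) : τ.toGrothendieck ≤ J := by
  intro X W hW
  obtain ⟨S, hS, R, hR, hle⟩ := href.exists_bind_le hW
  refine J.transitive (hσ X ⟨S, hS, Sieve.le_generate S⟩) W ?_
  rintro Y _ ⟨Z, h, f, hf, rfl⟩
  rw [Sieve.pullback_comp]
  refine J.pullback_stable h (J.superset_covering ?_ (hρ Z ⟨R hf, hR hf, Sieve.le_generate _⟩))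
  rw [Sieve.generate_le_iff]
  exact fun _ g hg => hle _ _ (Presieve.bind_comp f hf hg)

lemma isSeparated (href : RefinableBy τ ρ σ) {F : Cᵒᵖ ⥤ Type w}
    (hρ : ∀ ⦃X : C⦄ (R : Presieve X), R ∈ ρ X → Presieve.IsSeparatedFor F R)
    (hσ : ∀ ⦃X : C⦄ (R : Presieve X), R ∈ σ X → Presieve.IsSeparatedFor F R) :
    Presieve.IsSeparated τ.toGrothendieck F := by
  intro X W hW
  obtain ⟨S, hS, R, hR, hle⟩ := href.exists_bind_le hW
  exact ((hσ S hS).bind fun _ _ hf => hρ _ (hR hf)).mono hle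

lemma isSheaf (href : RefinableBy τ ρ σ) {F : Cᵒᵖ ⥤ Type w}
    (hρ : ∀ ⦃X : C⦄ (R : Presieve X), R ∈ ρ X → Presieve.IsSheafFor F R)
    (hσ : ∀ ⦃X : C⦄ (R : Presieve X), R ∈ σ X → Presieve.IsSheafFor F R) :
    Presieve.IsSheaf τ.toGrothendieck F := by
  have le_finest (K : Pretopology C) (hK : ∀ ⦃X : C⦄ (R : Presieve X), R ∈ K X →
      Presieve.IsSheafFor F R) : K.toGrothendieck ≤ Sheaf.finestTopology {F} := by
    refine Sheaf.le_finestTopology _ _ ?_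
    rintro _ rfl
    exact (Presieve.isSheaf_pretopology K).2 fun R hR => hK R hR
  exact Presieve.isSheaf_of_le F (href.toGrothendieck_le (le_finest ρ hρ) (le_finest σ hσ))
    (Sheaf.sheaf_for_finestTopology _ rfl)

lemma isLocallySurjective (href : RefinableBy τ ρ σ) {F G : Cᵒᵖ ⥤ Type w} (φ : F ⟶ G)
    (hφ : ∀ X, Function.Injective (φ.app X))
    (hF : ∀ ⦃X : C⦄ (R : Presieve X), R ∈ ρ X → Presieve.IsSheafFor F R)
    (hG : ∀ ⦃X : C⦄ (R : Presieve X), R ∈ ρ X → Presieve.IsSeparatedFor G R)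
    [Presheaf.IsLocallySurjective τ.toGrothendieck φ] :
    Presheaf.IsLocallySurjective σ.toGrothendieck φ where
  imageSieve_mem {X} t := by
    obtain ⟨S, hS, R, hR, hle⟩ :=
      href.exists_bind_le (Presheaf.imageSieve_mem τ.toGrothendieck φ t)
    refine ⟨S, hS, fun Y f hf => ?_⟩
    refine Presheaf.exists_app_eq_of_le_imageSieve φ hφ (hF _ (hR hf)) (hG _ (hR hf)) _ ?_
    rw [← Presheaf.pullback_imageSieve]
    exact fun _ g hg => hle _ _ (Presieve.bind_comp f hf hg)

lemma isSheaf_sheafify (href : RefinableBy τ ρ σ) (hρτ : ρ ≤ τ) (hστ : σ ≤ τ)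
    {F : Cᵒᵖ ⥤ Type u}
    (hρ : ∀ ⦃X : C⦄ (R : Presieve X), R ∈ ρ X → Presieve.IsSheafFor F R)
    (hσ : ∀ ⦃X : C⦄ (R : Presieve X), R ∈ σ X → Presieve.IsSeparatedFor F R) :
    Presieve.IsSheaf τ.toGrothendieck (σ.toGrothendieck.sheafify F) := by
  set Jτ := τ.toGrothendieck
  set φ := Jτ.toSheafify F
  have hFsep : Presieve.IsSeparated Jτ F :=
    href.isSeparated (fun _ R hR => (hρ R hR).isSeparatedFor) hσ
  have hτ : Presieve.IsSheaf Jτ (Jτ.sheafify F) :=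
    (isSheaf_iff_isSheaf_of_type _ _).1 (Jτ.sheafify_isSheaf F)
  have hρ' : ∀ ⦃X : C⦄ (R : Presieve X), R ∈ ρ X → Presieve.IsSheafFor (Jτ.sheafify F) R :=
    fun _ => (Presieve.isSheaf_pretopology ρ).1
      (Presieve.isSheaf_of_le _ (Pretopology.toGrothendieck_mono _ hρτ) hτ)
  have hσ' : Presheaf.IsSheaf σ.toGrothendieck (Jτ.sheafify F) :=
    (isSheaf_iff_isSheaf_of_type _ _).2
      (Presieve.isSheaf_of_le _ (Pretopology.toGrothendieck_mono _ hστ) hτ)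
  have hφ : ∀ X, Function.Injective (φ.app X) := by
    intro _ x y h
    have hxy := Presheaf.equalizerSieve_mem Jτ φ x y h
    exact (hFsep _ hxy).ext fun _ _ hf => hf
  have := href.isLocallySurjective φ hφ hρ fun _ R hR => (hρ' R hR).isSeparatedFor
  have := Presheaf.isLocallyInjective_of_injective σ.toGrothendieck φ hφ
  have := GrothendieckTopology.isIso_sheafifyLift_of_isLocallyBijective φ hσ'
  exact Presieve.isSheaf_iso Jτ (asIso (σ.toGrothendieck.sheafifyLift φ hσ')).symm hτ

end RefinableBy

/-- Let `ρ, σ, τ` be Grothendieck pretopologies with every `ρ`-cover and every `σ`-cover a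
`τ`-cover, and `τ` `ρ`-then-`σ` refinable.  If a presheaf of sets `F` is a sheaf for every
`ρ`-covering family and is `σ`-separated, then the sheafification of `F` for the topology
generated by `σ` is a sheaf for the topology generated by `τ`.  In particular a presheaf which
is a sheaf for every `ρ`-cover and for every `σ`-cover is a sheaf for the topology generated
by `τ`. -/
theorem stmt6 (ρ σ τ : Pretopology C)
    (hρτ : ∀ ⦃X : C⦄ (R : Presieve X), R ∈ ρ X → R ∈ τ X)
    (hστ : ∀ ⦃X : C⦄ (R : Presieve X), R ∈ σ X → R ∈ τ X)
    (href : RefinableBy τ ρ σ)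
    (F : Cᵒᵖ ⥤ Type u)
    (hρsheaf : ∀ ⦃X : C⦄ (R : Presieve X), R ∈ ρ X → Presieve.IsSheafFor F R)
    (hσsep : ∀ ⦃X : C⦄ (R : Presieve X), R ∈ σ X → Presieve.IsSeparatedFor F R) :
    Presieve.IsSheaf (Pretopology.toGrothendieck τ)
      ((Pretopology.toGrothendieck σ).sheafify F) ∧
    (∀ G : Cᵒᵖ ⥤ Type u,
      (∀ ⦃X : C⦄ (R : Presieve X), R ∈ ρ X → Presieve.IsSheafFor G R) →
      (∀ ⦃X : C⦄ (R : Presieve X), R ∈ σ X → Presieve.IsSheafFor G R) →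
      Presieve.IsSheaf (Pretopology.toGrothendieck τ) G) :=
  ⟨href.isSheaf_sheafify (fun _ R hR => hρτ R hR) (fun _ R hR => hστ R hR) hρsheaf hσsep,
    fun _ => href.isSheaf⟩
end

section
/- Let C be a category with pullbacks, F a presheaf of abelian groups (or of sets) on C, and V →g U →f X morphisms in C. For a morphism W → T, let Ȟ⁰(W/T, F) denote the equalizer of the two maps F(W) ⇉ F(W ×_T W) induced by the two projections. Assume: (i) F satisfies the sheaf condition for g, i.e. F(U) → F(V) ⇉ F(V ×_U V) is an equalizer diagram; and (ii) the map F(U ×_X U) → F(V ×_X V) induced by g ×_X g is injective. Then the canonical map Ȟ⁰(U/X, F) → Ȟ⁰(V/X, F), induced by restriction along g, is an isomorphism. -/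
/-!
Restriction along `g` takes `f`-cocycles to `g ≫ f`-cocycles because `g ×_X g` intertwines the
projections. A cocycle `y` for `g ≫ f` is a fortiori compatible on `V ×_U V ⟶ V ×_X V`, so by the
sheaf condition for `g` it descends to a unique `x` on `U`; the two restrictions of `x` to
`U ×_X U` agree after pulling back along `g ×_X g`, hence agree by injectivity.
-/

open CategoryTheory CategoryTheory.Limits Opposite

namespace CategoryTheory.Functor

variable {C : Type*} [Category C] (F : Cᵒᵖ ⥤ Type*)

lemma map_map_eq_of_comp_eq {W Y Y' Z : C} {a : W ⟶ Y} {c : Y ⟶ Z} {b : W ⟶ Y'} {d : Y' ⟶ Z}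
    (h : a ≫ c = b ≫ d) (x : F.obj (op Z)) :
    F.map a.op (F.map c.op x) = F.map b.op (F.map d.op x) := by
  rw [← map_comp_apply, ← map_comp_apply, ← op_comp, ← op_comp, h]

variable [HasPullbacks C]

lemma map_eq_map_of_cocycle {U X W : C} {f : U ⟶ X} {x : F.obj (op U)}
    (hx : F.map (pullback.fst f f).op x = F.map (pullback.snd f f).op x)
    {a b : W ⟶ U} (hab : a ≫ f = b ≫ f) :
    F.map a.op x = F.map b.op x := by
  obtain ⟨l, rfl, rfl⟩ : ∃ l : W ⟶ pullback f f,
      l ≫ pullback.fst f f = a ∧ l ≫ pullback.snd f f = b :=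
    ⟨_, pullback.lift_fst a b hab, pullback.lift_snd a b hab⟩
  rw [op_comp, op_comp, map_comp_apply, map_comp_apply, hx]

end CategoryTheory.Functor

/-- Let `F` be a presheaf of sets on a category with pullbacks and `V ⟶g U ⟶f X` morphisms.
Write `Ȟ⁰(W/T, F)` for the equalizer of the two restrictions `F(W) ⇉ F(W ×_T W)`.  Assume
(i) `F` satisfies the sheaf condition for `g`, i.e. `F(U) → F(V) ⇉ F(V ×_U V)` is an equalizer
diagram, and (ii) `F(U ×_X U) → F(V ×_X V)` is injective.  Then the canonical restriction map
`Ȟ⁰(U/X, F) → Ȟ⁰(V/X, F)` is an isomorphism; this is expressed below by saying that `F(g)`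
maps cocycles for `f` to cocycles for `g ≫ f`, injectively, and onto all such cocycles. -/
theorem stmt13 {C : Type*} [Category C] [HasPullbacks C]
    (F : Cᵒᵖ ⥤ Type*) {X U V : C} (f : U ⟶ X) (g : V ⟶ U)
    -- (i) `F(U) → F(V) ⇉ F(V ×_U V)` is an equalizer diagram:
    (hsheaf : ∀ y : F.obj (op V),
      F.map (pullback.fst g g).op y = F.map (pullback.snd g g).op y →
      ∃! x : F.obj (op U), F.map g.op x = y)
    -- (ii) `F(U ×_X U) → F(V ×_X V)` is injective:
    (hinj : Function.Injective
      (F.map (pullback.map (g ≫ f) (g ≫ f) f f g g (𝟙 X)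
        (by simp) (by simp)).op)) :
    -- restriction maps `Ȟ⁰(U/X, F)` into `Ȟ⁰(V/X, F)` …
    (∀ x : F.obj (op U),
      F.map (pullback.fst f f).op x = F.map (pullback.snd f f).op x →
      F.map (pullback.fst (g ≫ f) (g ≫ f)).op (F.map g.op x) =
        F.map (pullback.snd (g ≫ f) (g ≫ f)).op (F.map g.op x)) ∧
    -- … injectively …
    (∀ x x' : F.obj (op U),
      F.map (pullback.fst f f).op x = F.map (pullback.snd f f).op x →
      F.map (pullback.fst f f).op x' = F.map (pullback.snd f f).op x' →
      F.map g.op x = F.map g.op x' → x = x') ∧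
    -- … and surjectively onto `Ȟ⁰(V/X, F)`:
    (∀ y : F.obj (op V),
      F.map (pullback.fst (g ≫ f) (g ≫ f)).op y =
        F.map (pullback.snd (g ≫ f) (g ≫ f)).op y →
      ∃ x : F.obj (op U),
        (F.map (pullback.fst f f).op x = F.map (pullback.snd f f).op x) ∧
        F.map g.op x = y) := by
  have hcomm : (pullback.fst (g ≫ f) (g ≫ f) ≫ g) ≫ f =
      (pullback.snd (g ≫ f) (g ≫ f) ≫ g) ≫ f := by
    simp [pullback.condition]
  have hfst (x : F.obj (op U)) := F.map_map_eq_of_comp_eq (pullback.lift_fst _ _ hcomm) x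
  have hsnd (x : F.obj (op U)) := F.map_map_eq_of_comp_eq (pullback.lift_snd _ _ hcomm) x
  refine ⟨fun x hx => ?_, fun x x' _ _ hgx => ?_, fun y hy => ?_⟩
  · rw [← hfst, ← hsnd, hx]
  · obtain ⟨_, -, huniq⟩ := hsheaf (F.map g.op x)
      (F.map_map_eq_of_comp_eq pullback.condition x)
    exact (huniq x rfl).trans (huniq x' hgx.symm).symm
  · obtain ⟨x, hgx, -⟩ := hsheaf y
      (F.map_eq_map_of_cocycle hy (by rw [reassoc_of% pullback.condition]))
    refine ⟨x, hinj ?_, hgx⟩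
    rw [pullback.map, hfst, hsnd, hgx, hy]
end

section
/- Let T be a triangulated category (a pretriangulated category satisfying the octahedral axiom) admitting all small coproducts, and suppose T is compactly generated: there is a set G of objects of T such that every g ∈ G is compact and such that an object E of T is zero whenever Hom(g⟦n⟧, E) = 0 for all g ∈ G and all n ∈ ℤ. Let S ⊆ ℤ be a multiplicatively closed set of integers. Then: (a) the inclusion into T of the full subcategory T[S⁻¹] of ℤ[S⁻¹]-local objects admits a left adjoint; and (b) the inclusion into T of the full subcategory _S T of objects F such that Hom(F, E) = 0 for every ℤ[S⁻¹]-local object E admits a right adjoint. -/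
open CategoryTheory CategoryTheory.Limits CategoryTheory.Pretriangulated DirectSum

universe v u

variable {T : Type u} [Category.{v} T]

/-- An object `E` of an additive category is `ℤ[S⁻¹]`-local if `n • 𝟙 E` is an isomorphism for
every `n ∈ S`. -/
def IsLocalObj [Preadditive T] (S : Set ℤ) (E : T) : Prop :=
  ∀ n ∈ S, IsIso (n • 𝟙 E)

/-- Postcomposition with a fixed morphism, as an additive map between hom groups. -/
def postcompHom [Preadditive T] (g : T) {A B : T} (h : A ⟶ B) : (g ⟶ A) →+ (g ⟶ B) :=
  AddMonoidHom.mk' (fun φ => φ ≫ h) fun _ _ => Preadditive.add_comp _ _ _ _ _ _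

/-- An object `g` is compact if for every small family `(X i)` the canonical map
`⊕ᵢ Hom(g, Xᵢ) → Hom(g, ∐ᵢ Xᵢ)` is bijective. -/
def IsCompactObj [Preadditive T] [HasCoproducts.{v} T] (g : T) : Prop :=
  ∀ (ι : Type v) [DecidableEq ι] (X : ι → T),
    Function.Bijective (DirectSum.toAddMonoid (fun i => postcompHom g (Sigma.ι X i)) :
      (⨁ i, (g ⟶ X i)) →+ (g ⟶ ∐ X))

/-! Enumerate `S ∪ {1}` as a sequence `(eₙ)` in which every element of `S` occurs infinitely
often, and let `L` be the homotopy colimit of `E →e₀ E →e₁ E → ⋯`, the cone of `1 - shift` on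
`∐ₙ E`. A map from `L` to a `ℤ[S⁻¹]`-local object is a compatible family of maps out of the
stages, hence determined by its restriction to the first stage, so `E → L` is universal. For
compact `A`, `Hom(A, L)` is the colimit of `Hom(A, E)` along multiplication by the `eₙ`, on which
every `s ∈ S` acts bijectively; as compact objects detect isomorphisms, `L` is local. The fibre
of `E → L` is then the coreflection into the left orthogonal of the local objects. -/

open Filter

namespace CategoryTheory.Adjunction

variable {C D : Type*} [Category C] [Category D] {F : C ⥤ D} {G : D ⥤ C}

lemma comp_map_eq (adj : F ⊣ G) {A : C} {X Y : D} (f : X ⟶ Y) :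
    (fun x : A ⟶ G.obj X => x ≫ G.map f) =
      adj.homEquiv A Y ∘ (fun x => x ≫ f) ∘ (adj.homEquiv A X).symm := by
  ext x
  simp [homEquiv_naturality_right]

lemma map_comp_eq (adj : F ⊣ G) {X Y : C} {B : D} (f : X ⟶ Y) :
    (fun x : F.obj Y ⟶ B => F.map f ≫ x) =
      (adj.homEquiv X B).symm ∘ (fun x => f ≫ x) ∘ adj.homEquiv Y B := by
  ext x
  simp [homEquiv_naturality_left_symm]

lemma injective_comp_map_iff (adj : F ⊣ G) {A : C} {X Y : D} (f : X ⟶ Y) :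
    Function.Injective (fun x : A ⟶ G.obj X => x ≫ G.map f) ↔
      Function.Injective (fun x : F.obj A ⟶ X => x ≫ f) := by
  rw [adj.comp_map_eq, EquivLike.comp_injective, EquivLike.injective_comp]

lemma surjective_map_comp_iff (adj : F ⊣ G) {X Y : C} {B : D} (f : X ⟶ Y) :
    Function.Surjective (fun x : F.obj Y ⟶ B => F.map f ≫ x) ↔
      Function.Surjective (fun x : Y ⟶ G.obj B => f ≫ x) := by
  rw [adj.map_comp_eq, EquivLike.comp_surjective, EquivLike.surjective_comp]

lemma bijective_map_comp_iff (adj : F ⊣ G) {X Y : C} {B : D} (f : X ⟶ Y) :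
    Function.Bijective (fun x : F.obj Y ⟶ B => F.map f ≫ x) ↔
      Function.Bijective (fun x : Y ⟶ G.obj B => f ≫ x) := by
  rw [adj.map_comp_eq, EquivLike.comp_bijective, EquivLike.bijective_comp]

end CategoryTheory.Adjunction

namespace CategoryTheory

variable {C : Type*} [Category C] [Preadditive C] [HasZeroObject C] [HasShift C ℤ]
  [∀ n : ℤ, (shiftFunctor C n).Additive] [Pretriangulated C]
  {Tr : Triangle C} (hT : Tr ∈ distTriang C)
include hT

lemma Pretriangulated.surjective_comp_mor₂_of_injective {A : C}
    (h : Function.Injective fun x : A ⟶ Tr.obj₁⟦(1 : ℤ)⟧ => x ≫ Tr.mor₁⟦(1 : ℤ)⟧') :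
    Function.Surjective fun x : A ⟶ Tr.obj₂ => x ≫ Tr.mor₂ := by
  intro z
  have hz : z ≫ Tr.mor₃ = 0 := h (by simp [comp_distTriang_mor_zero₃₁ _ hT])
  obtain ⟨y, rfl⟩ := Triangle.coyoneda_exact₃ Tr hT z hz
  exact ⟨y, rfl⟩

lemma Pretriangulated.injective_mor₂_comp_of_surjective {B : C}
    (h : Function.Surjective fun x : Tr.obj₂⟦(1 : ℤ)⟧ ⟶ B => Tr.mor₁⟦(1 : ℤ)⟧' ≫ x) :
    Function.Injective fun x : Tr.obj₃ ⟶ B => Tr.mor₂ ≫ x := by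
  refine (injective_iff_map_eq_zero (Preadditive.leftComp B Tr.mor₂)).2 fun χ hχ => ?_
  obtain ⟨ξ, rfl⟩ := Triangle.yoneda_exact₃ Tr hT χ hχ
  obtain ⟨ξ', rfl⟩ := h ξ
  simp [comp_distTriang_mor_zero₃₁_assoc _ hT]

lemma Pretriangulated.eq_zero_of_surjective_of_injective {A : C}
    (h₁ : Function.Surjective fun x : A ⟶ Tr.obj₁ => x ≫ Tr.mor₁)
    (h₂ : Function.Injective fun x : A ⟶ Tr.obj₁⟦(1 : ℤ)⟧ => x ≫ Tr.mor₁⟦(1 : ℤ)⟧')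
    (z : A ⟶ Tr.obj₃) : z = 0 := by
  obtain ⟨y, rfl⟩ := surjective_comp_mor₂_of_injective hT h₂ z
  obtain ⟨x, rfl⟩ := h₁ y
  simp [comp_distTriang_mor_zero₁₂ _ hT]

end CategoryTheory

namespace CategoryTheory.ObjectProperty

variable {C : Type*} [Category C] (P : ObjectProperty C)

lemma isRightAdjoint_ι_of_isLocal (h : ∀ X : C, ∃ (Y : C) (f : X ⟶ Y), P Y ∧ P.isLocal f) :
    P.ι.IsRightAdjoint := by
  rw [Functor.isRightAdjoint_iff_leftAdjointObjIsDefined_eq_top]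
  ext X
  simp only [Pi.top_apply, Prop.top_eq_true, iff_true, Functor.leftAdjointObjIsDefined_iff]
  obtain ⟨Y, f, hY, hf⟩ := h X
  exact (show (P.ι ⋙ coyoneda.obj (Opposite.op X)).CorepresentableBy ⟨Y, hY⟩ from
    { homEquiv {Z} := P.fullyFaithfulι.homEquiv.trans (hf.homEquiv Z.obj Z.property)
      homEquiv_comp _ _ := (Category.assoc _ _ _).symm }).isCorepresentable

lemma isLeftAdjoint_ι_of_isColocal (h : ∀ Y : C, ∃ (X : C) (f : X ⟶ Y), P X ∧ P.isColocal f) :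
    P.ι.IsLeftAdjoint := by
  rw [Functor.isLeftAdjoint_iff_rightAdjointObjIsDefined_eq_top]
  ext Y
  simp only [Pi.top_apply, Prop.top_eq_true, iff_true, Functor.rightAdjointObjIsDefined_iff]
  obtain ⟨X, f, hX, hf⟩ := h Y
  exact (show (P.ι.op ⋙ yoneda.obj Y).RepresentableBy ⟨X, hX⟩ from
    { homEquiv {Z} := P.fullyFaithfulι.homEquiv.trans (hf.homEquiv Z.obj Z.property)
      homEquiv_comp _ _ := Category.assoc _ _ _ }).isRepresentable

lemma isLocal_shift_map [HasShift C ℤ] [P.IsStableUnderShift ℤ] {X Y : C} {f : X ⟶ Y}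
    (hf : P.isLocal f) (n : ℤ) : P.isLocal (f⟦n⟧') := fun Z hZ =>
  ((shiftEquiv C n).toAdjunction.bijective_map_comp_iff f).2 (hf _ (P.le_shift (-n) Z hZ))

section Pretriangulated

variable [Preadditive C] [HasZeroObject C] [HasShift C ℤ]
  [∀ n : ℤ, (shiftFunctor C n).Additive] [Pretriangulated C] [P.IsStableUnderShift ℤ]

section

variable {Tr : Triangle C} (hT : Tr ∈ distTriang C)
include hT

lemma leftOrthogonal_obj₃_of_isLocal_mor₁ (h : P.isLocal Tr.mor₁) :
    P.leftOrthogonal Tr.obj₃ := fun E ψ hE => by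
  have hψ : Tr.mor₂ ≫ ψ = 0 := (h E hE).1 (by simp [comp_distTriang_mor_zero₁₂_assoc _ hT])
  obtain ⟨g, rfl⟩ := Triangle.yoneda_exact₃ Tr hT ψ hψ
  obtain ⟨χ, rfl⟩ := (P.isLocal_shift_map h 1 E hE).2 g
  simp [comp_distTriang_mor_zero₃₁_assoc _ hT]

lemma isColocal_mor₁_of_obj₃ (h : P Tr.obj₃) : P.leftOrthogonal.isColocal Tr.mor₁ := by
  intro F hF
  refine ⟨(injective_iff_map_eq_zero (Preadditive.rightComp F Tr.mor₁)).2 fun χ hχ => ?_,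
    fun x => ?_⟩
  · obtain ⟨g, rfl⟩ := Triangle.coyoneda_exact₂ _ (inv_rot_of_distTriang _ hT) χ hχ
    rw [hF g (P.le_shift (-1) _ h), Limits.zero_comp]
    rfl
  · obtain ⟨χ, rfl⟩ := Triangle.coyoneda_exact₂ Tr hT x (hF _ h)
    exact ⟨χ, rfl⟩

end

lemma exists_isColocal_leftOrthogonal {X L : C} {η : X ⟶ L} (hL : P L) (hη : P.isLocal η) :
    ∃ (Y : C) (f : Y ⟶ X), P.leftOrthogonal Y ∧ P.leftOrthogonal.isColocal f := by
  obtain ⟨Z, p, q, hT⟩ := distinguished_cocone_triangle η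
  exact ⟨_, _, P.leftOrthogonal.le_shift (-1) _ (P.leftOrthogonal_obj₃_of_isLocal_mor₁ hT hη),
    P.isColocal_mor₁_of_obj₃ (inv_rot_of_distTriang _ hT) hL⟩

end Pretriangulated

end CategoryTheory.ObjectProperty

lemma IsCompactObj.shift [Preadditive T] [HasCoproducts.{v} T] [HasShift T ℤ]
    [∀ n : ℤ, (shiftFunctor T n).Additive] {g : T} (hg : IsCompactObj g) (n : ℤ) :
    IsCompactObj (g⟦n⟧) := by
  intro ι _ X
  let G := (shiftEquiv T n).inverse
  have : (shiftEquiv T n).functor.Additive := inferInstanceAs (shiftFunctor T n).Additive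
  have : G.Additive := inferInstanceAs (shiftFunctor T (-n)).Additive
  let adj := (shiftEquiv T n).toAdjunction
  let e : (⨁ i, (g⟦n⟧ ⟶ X i)) ≃+ ⨁ i, (g ⟶ G.obj (X i)) :=
    DFinsupp.mapRange.addEquiv fun i => adj.homAddEquiv g (X i)
  let σ := sigmaComparison G X
  -- `Hom(g⟦n⟧, -) ≅ Hom(g, -⟦-n⟧)`, and `⟦-n⟧` commutes with coproducts.
  have key : ∀ x, (toAddMonoid fun i => postcompHom (g⟦n⟧) (Sigma.ι X i)) x =
      (adj.homAddEquiv g (∐ X)).symm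
        ((toAddMonoid fun i => postcompHom g (Sigma.ι (fun i => G.obj (X i)) i)) (e x) ≫ σ) := by
    intro x
    induction x using DirectSum.induction_on with
    | zero => rw [map_zero, map_zero, map_zero, Limits.zero_comp, map_zero]; rfl
    | of i a =>
      have hof : e (of _ i a) = of _ i (adj.homEquiv _ _ a) :=
        DFinsupp.mapRange_single (hf := fun _ => map_zero _)
      rw [hof, toAddMonoid_of, toAddMonoid_of]
      simp only [postcompHom, AddMonoidHom.mk'_apply, Category.assoc, σ, ι_comp_sigmaComparison]
      exact ((adj.homEquiv _ _).symm_apply_eq.2 (adj.homEquiv_naturality_right a _).symm).symm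
    | add x y hx hy => rw [map_add, hx, hy, map_add, map_add, Preadditive.add_comp, map_add]; rfl
  rw [show ⇑(toAddMonoid fun i => postcompHom (g⟦n⟧) (Sigma.ι X i)) = _ from funext key]
  exact (AddEquiv.bijective _).comp
    ((asIso σ).homToEquiv.bijective.comp ((hg ι _).comp (AddEquiv.bijective e)))

namespace Telescope

section DirectSum

variable {A : Type*} [AddCommGroup A] (e : ℕ → ℤ)

/-- The transition map from stage `n` to stage `m` of the colimit of `A →e₀ A →e₁ A → ⋯`. -/
def coeff (n m : ℕ) : ℤ := ∏ i ∈ Finset.Ico n m, e i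

lemma coeff_succ {n m : ℕ} (h : n ≤ m) : coeff e n (m + 1) = e m * coeff e n m := by
  rw [coeff, coeff, Finset.prod_Ico_succ_top h, mul_comm]

/-- `1 - shift` on `⨁ₙ A`, whose cokernel is the colimit of `A →e₀ A →e₁ A → ⋯`. -/
noncomputable def diff : (⨁ _ : ℕ, A) →+ ⨁ _ : ℕ, A :=
  AddMonoidHom.id _ - toAddMonoid fun n => (of (fun _ => A) (n + 1)).comp (zsmulAddGroupHom (e n))

lemma diff_of (n : ℕ) (a : A) :
    diff e (of (fun _ => A) n a) = of (fun _ => A) n a - of (fun _ => A) (n + 1) (e n • a) := by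
  simp [diff, toAddMonoid_of]

noncomputable def eval (m : ℕ) : (⨁ _ : ℕ, A) →+ A :=
  toAddMonoid fun n => if n ≤ m then zsmulAddGroupHom (coeff e n m) else 0

lemma eval_of (m n : ℕ) (a : A) :
    eval e m (of (fun _ => A) n a) = if n ≤ m then coeff e n m • a else 0 := by
  simp only [eval, toAddMonoid_of]
  split <;> simp

lemma eval_diff (m : ℕ) (c : ⨁ _ : ℕ, A) : eval e m (diff e c) = c m := by
  induction c using DirectSum.induction_on with
  | zero => simp
  | of n a =>
    rw [diff_of, map_sub, eval_of, eval_of]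
    rcases lt_trichotomy n m with h | rfl | h
    · rw [if_pos h.le, if_pos (show n + 1 ≤ m from h), of_eq_of_ne _ _ _ h.ne', smul_smul,
        coeff, coeff, Finset.prod_eq_prod_Ico_succ_bot h, mul_comm (e n), sub_self]
    · simp [coeff]
    · rw [if_neg (by omega), if_neg (by omega), of_eq_of_ne _ _ _ (by omega), sub_zero]
  | add x y hx hy => rw [map_add, map_add, hx, hy, DirectSum.add_apply]

lemma diff_injective : Function.Injective (diff (A := A) e) := by
  refine (injective_iff_map_eq_zero _).2 fun c hc => DFinsupp.ext fun m => ?_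
  rw [← eval_diff e m, hc, map_zero, DirectSum.zero_apply]

lemma exists_diff_eq_sub_of_le {n m : ℕ} (h : n ≤ m) (a : A) :
    ∃ c, diff e c = of (fun _ => A) n a - of (fun _ => A) m (coeff e n m • a) := by
  induction m, h using Nat.le_induction with
  | base => exact ⟨0, by simp [coeff]⟩
  | succ m hnm ih =>
    obtain ⟨c, hc⟩ := ih
    refine ⟨c + of (fun _ => A) m (coeff e n m • a), ?_⟩
    rw [map_add, hc, diff_of, smul_smul, ← coeff_succ e hnm]
    abel

lemma exists_eq_of_add_diff (b : ⨁ _ : ℕ, A) :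
    ∃ (N : ℕ) (z : A) (c : ⨁ _ : ℕ, A), b = of (fun _ => A) N z + diff e c := by
  induction b using DirectSum.induction_on with
  | zero => exact ⟨0, 0, 0, by simp⟩
  | of n a => exact ⟨n, a, 0, by simp⟩
  | add x y hx hy =>
    obtain ⟨N₁, z₁, c₁, rfl⟩ := hx
    obtain ⟨N₂, z₂, c₂, rfl⟩ := hy
    obtain ⟨d₁, hd₁⟩ := exists_diff_eq_sub_of_le e (le_max_left N₁ N₂) z₁
    obtain ⟨d₂, hd₂⟩ := exists_diff_eq_sub_of_le e (le_max_right N₁ N₂) z₂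
    refine ⟨max N₁ N₂, coeff e N₁ (max N₁ N₂) • z₁ + coeff e N₂ (max N₁ N₂) • z₂,
      c₁ + c₂ + d₁ + d₂, ?_⟩
    rw [map_add, map_add, map_add, hd₁, hd₂, map_add]
    abel

lemma exists_coeff_smul_eq_zero {n : ℕ} {x : A} {c : ⨁ _ : ℕ, A}
    (h : diff e c = of (fun _ => A) n x) : ∃ m, n ≤ m ∧ coeff e n m • x = 0 := by
  classical
  let m := max n (c.support.sup id + 1)
  have hcm : c m = 0 := by
    by_contra hne
    have : m ≤ c.support.sup id := Finset.le_sup (f := id) (DFinsupp.mem_support_iff.2 hne)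
    omega
  refine ⟨m, le_max_left _ _, ?_⟩
  have := eval_diff e m c
  rwa [h, eval_of, if_pos (le_max_left _ _), hcm] at this

variable {e} {s : ℤ} (hs : ∃ᶠ n in atTop, e n = s)
include hs

lemma exists_eq_smul_add_diff (b : ⨁ _ : ℕ, A) : ∃ a c, b = s • a + diff e c := by
  obtain ⟨N, z, c, rfl⟩ := exists_eq_of_add_diff e b
  obtain ⟨k, hk, hek⟩ := frequently_atTop.1 hs N
  obtain ⟨d, hd⟩ := exists_diff_eq_sub_of_le e (hk.trans k.le_succ) z
  refine ⟨of (fun _ => A) (k + 1) (coeff e N k • z), c + d, ?_⟩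
  rw [map_add, hd, ← map_zsmul, smul_smul, ← hek, ← coeff_succ e hk]
  abel

lemma exists_eq_diff_of_smul_eq_diff {a c : ⨁ _ : ℕ, A} (h : s • a = diff e c) :
    ∃ c', a = diff e c' := by
  obtain ⟨N, z, d, rfl⟩ := exists_eq_of_add_diff e a
  have hc : diff e (c - s • d) = of (fun _ => A) N (s • z) := by
    rw [map_sub, ← h, smul_add, map_zsmul, map_zsmul]
    abel
  obtain ⟨m, hNm, hz⟩ := exists_coeff_smul_eq_zero e hc
  obtain ⟨k, hk, hek⟩ := frequently_atTop.1 hs m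
  have hzero : coeff e N (k + 1) • z = 0 := by
    have hcoeff : coeff e N (k + 1) = coeff e m k * (coeff e N m * s) := by
      rw [coeff_succ e (hNm.trans hk), hek, coeff, coeff, coeff,
        ← Finset.prod_Ico_consecutive _ hNm hk]
      ring
    rw [hcoeff, mul_smul, mul_smul, hz, smul_zero]
  obtain ⟨d', hd'⟩ := exists_diff_eq_sub_of_le e (hNm.trans (hk.trans k.le_succ)) z
  exact ⟨d' + d, by rw [map_add, hd', hzero, map_zero, sub_zero]⟩

end DirectSum

section Sequence

variable {M : Type*} [AddCommGroup M] (e : ℕ → ℤ)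

lemma exists_seq_sub_smul_succ_eq (he : ∀ n, Function.Surjective fun x : M => e n • x)
    (g : ℕ → M) (θ : M) : ∃ f : ℕ → M, f 0 = θ ∧ ∀ n, f n - e n • f (n + 1) = g n := by
  choose u hu using he
  refine ⟨fun n => Nat.rec θ (fun n fn => u n (fn - g n)) n, rfl, fun n => ?_⟩
  simp only [hu, sub_sub_cancel]

lemma seq_eq_zero_of_sub_smul_succ_eq_zero (he : ∀ n, Function.Injective fun x : M => e n • x)
    {f : ℕ → M} (h₀ : f 0 = 0) (h : ∀ n, f n - e n • f (n + 1) = 0) (n : ℕ) : f n = 0 := by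
  induction n with
  | zero => exact h₀
  | succ n ih =>
    refine he n (show e n • f (n + 1) = e n • 0 from ?_)
    rw [← sub_eq_zero.1 (h n), ih, smul_zero]

end Sequence

variable [Preadditive T] [HasCoproducts.{v} T] (E : T) (e : ℕ → ℤ)

/-- Indexed by `ULift ℕ` so that it exists under `HasCoproducts.{v}`. -/
noncomputable abbrev coprod : T := ∐ fun _ : ULift.{v} ℕ => E

noncomputable abbrev incl (n : ℕ) : E ⟶ coprod E := Sigma.ι (fun _ : ULift.{v} ℕ => E) ⟨n⟩

noncomputable def diffHom : coprod E ⟶ coprod E :=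
  𝟙 _ - Sigma.desc fun i => e i.down • incl E (i.down + 1)

lemma incl_diffHom (n : ℕ) : incl E n ≫ diffHom E e = incl E n - e n • incl E (n + 1) := by
  simp [diffHom]

section Contravariant

variable {E e} {W : T} (he : ∀ n, Function.Bijective fun x : E ⟶ W => e n • x)
include he

lemma exists_diffHom_comp_eq (g : coprod E ⟶ W) (θ : E ⟶ W) :
    ∃ f, diffHom E e ≫ f = g ∧ incl E 0 ≫ f = θ := by
  obtain ⟨F, hF₀, hF⟩ :=
    exists_seq_sub_smul_succ_eq e (fun n => (he n).2) (fun n => incl E n ≫ g) θ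
  refine ⟨Sigma.desc fun i => F i.down, Sigma.hom_ext _ _ fun ⟨n⟩ => ?_, by simpa using hF₀⟩
  simpa [reassoc_of% incl_diffHom E e n, Preadditive.sub_comp] using hF n

lemma eq_zero_of_diffHom_comp_eq_zero {f : coprod E ⟶ W} (h : diffHom E e ≫ f = 0)
    (h₀ : incl E 0 ≫ f = 0) : f = 0 := by
  refine Sigma.hom_ext _ _ fun ⟨n⟩ => ?_
  refine (seq_eq_zero_of_sub_smul_succ_eq_zero e (fun n => (he n).1) (f := fun n => incl E n ≫ f)
    h₀ (fun n => ?_) n).trans (Limits.comp_zero).symm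
  have := congrArg (incl E n ≫ ·) h
  simpa only [← Category.assoc, incl_diffHom, Preadditive.sub_comp, Preadditive.zsmul_comp,
    Limits.comp_zero] using this

end Contravariant

section Covariant

variable (A : T)

noncomputable def homSum : (⨁ _ : ℕ, (A ⟶ E)) →+ (A ⟶ coprod E) :=
  toAddMonoid fun n => postcompHom A (incl E n)

lemma homSum_diff (c : ⨁ _ : ℕ, (A ⟶ E)) :
    homSum E A (diff e c) = homSum E A c ≫ diffHom E e := by
  induction c using DirectSum.induction_on with
  | zero => simp
  | of n a =>
    simp [homSum, diff_of, toAddMonoid_of, postcompHom, incl_diffHom, Preadditive.comp_sub]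
  | add x y hx hy => rw [map_add, map_add, hx, hy, map_add, Preadditive.add_comp]

variable {A}

lemma bijective_homSum (hA : IsCompactObj A) : Function.Bijective (homSum E A) := by
  classical
  let r : (⨁ _ : ℕ, (A ⟶ E)) ≃+ ⨁ _ : ULift.{v} ℕ, (A ⟶ E) := equivCongrLeft Equiv.ulift.symm
  have key : ∀ x, homSum E A x =
      toAddMonoid (fun i => postcompHom A (Sigma.ι (fun _ : ULift.{v} ℕ => E) i)) (r x) := by
    intro x
    induction x using DirectSum.induction_on with
    | zero => simp
    | of n a =>
      have : r (of _ n a) = of _ ⟨n⟩ a := by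
        ext ⟨i⟩
        simp [r, equivCongrLeft_apply, of_apply]
      rw [this, homSum, toAddMonoid_of, toAddMonoid_of]
    | add x y hx hy => rw [map_add, hx, hy, map_add, map_add]
  rw [show ⇑(homSum E A) = _ from funext key]
  exact (hA _ _).comp r.bijective

variable (hA : IsCompactObj A)
include hA

lemma injective_comp_diffHom : Function.Injective fun x : A ⟶ coprod E => x ≫ diffHom E e := by
  have hκ := bijective_homSum E hA
  intro x y hxy
  obtain ⟨a, rfl⟩ := hκ.2 x
  obtain ⟨b, rfl⟩ := hκ.2 y
  simp only [← homSum_diff] at hxy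
  rw [diff_injective e (hκ.1 hxy)]

variable {s : ℤ} (hs : ∃ᶠ n in atTop, e n = s)
include hs

lemma exists_eq_smul_add_comp_diffHom (b : A ⟶ coprod E) :
    ∃ a c, b = s • a + c ≫ diffHom E e := by
  obtain ⟨b, rfl⟩ := (bijective_homSum E hA).2 b
  obtain ⟨a, c, rfl⟩ := exists_eq_smul_add_diff hs b
  exact ⟨homSum E A a, homSum E A c, by rw [map_add, map_zsmul, homSum_diff]⟩

lemma exists_eq_comp_diffHom_of_smul_eq {a c : A ⟶ coprod E} (h : s • a = c ≫ diffHom E e) :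
    ∃ c', a = c' ≫ diffHom E e := by
  obtain ⟨a, rfl⟩ := (bijective_homSum E hA).2 a
  obtain ⟨c, rfl⟩ := (bijective_homSum E hA).2 c
  rw [← map_zsmul, ← homSum_diff] at h
  obtain ⟨c', rfl⟩ := exists_eq_diff_of_smul_eq_diff hs ((bijective_homSum E hA).1 h)
  exact ⟨homSum E A c', homSum_diff ..⟩

end Covariant

section Cone

variable [HasZeroObject T] [HasShift T ℤ] [∀ n : ℤ, (shiftFunctor T n).Additive]
  [Pretriangulated T] {E e} {L : T} {π : coprod E ⟶ L} {δ : L ⟶ (coprod E)⟦(1 : ℤ)⟧}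
  (hT : Triangle.mk (diffHom E e) π δ ∈ distTriang T)
include hT

lemma diffHom_comp_mor₂ : diffHom E e ≫ π = 0 := comp_distTriang_mor_zero₁₂ _ hT

lemma bijective_smul_of_isCompactObj {A : T} (hA : IsCompactObj A) {s : ℤ}
    (hs : ∃ᶠ n in atTop, e n = s) : Function.Bijective fun y : A ⟶ L => s • y := by
  have hπ : Function.Surjective fun x : A ⟶ coprod E => x ≫ π :=
    surjective_comp_mor₂_of_injective hT
      (((shiftEquiv T 1).symm.toAdjunction.injective_comp_map_iff _).2
        (injective_comp_diffHom E e (hA.shift (-1))))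
  refine ⟨(injective_iff_map_eq_zero (zsmulAddGroupHom (α := A ⟶ L) s)).2 fun y hy => ?_,
    fun y => ?_⟩
  · obtain ⟨x, rfl⟩ := hπ y
    obtain ⟨c, hc⟩ := Triangle.coyoneda_exact₂ _ hT (s • x)
      (show (s • x) ≫ π = 0 by rw [Preadditive.zsmul_comp]; exact hy)
    obtain ⟨c', rfl⟩ := exists_eq_comp_diffHom_of_smul_eq E e hA hs hc
    simp [diffHom_comp_mor₂ hT]
  · obtain ⟨x, rfl⟩ := hπ y
    obtain ⟨a, c, rfl⟩ := exists_eq_smul_add_comp_diffHom E e hA hs x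
    refine ⟨a ≫ π, ?_⟩
    simp [Preadditive.add_comp, diffHom_comp_mor₂ hT]

lemma isLocal_incl_zero_comp (P : ObjectProperty T) [P.IsStableUnderShift ℤ]
    (hP : ∀ W, P W → ∀ n, Function.Bijective fun x : E ⟶ W => e n • x) :
    P.isLocal (incl E 0 ≫ π) := by
  intro W hW
  have hπ : Function.Injective fun χ : L ⟶ W => π ≫ χ :=
    injective_mor₂_comp_of_surjective hT
      (((shiftEquiv T 1).toAdjunction.surjective_map_comp_iff _).2 fun g =>
        (exists_diffHom_comp_eq (hP _ (P.le_shift (-1) W hW)) g 0).imp fun _ => And.left)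
  refine ⟨(injective_iff_map_eq_zero (Preadditive.leftComp W (incl E 0 ≫ π))).2 fun χ hχ => ?_,
    fun θ => ?_⟩
  · change (incl E 0 ≫ π) ≫ χ = 0 at hχ
    have hπχ : π ≫ χ = 0 := eq_zero_of_diffHom_comp_eq_zero (hP W hW)
      (by simp [reassoc_of% diffHom_comp_mor₂ hT]) (by simpa using hχ)
    exact hπ (show π ≫ χ = π ≫ 0 by rw [hπχ, Limits.comp_zero])
  · obtain ⟨f, hf, rfl⟩ := exists_diffHom_comp_eq (hP W hW) 0 θ
    obtain ⟨χ, rfl⟩ := Triangle.yoneda_exact₂ _ hT f hf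
    exact ⟨χ, Category.assoc _ _ _⟩

end Cone

end Telescope

section LocalObjects

variable [Preadditive T] {S : Set ℤ}

lemma IsLocalObj.bijective_smul {W : T} (hW : IsLocalObj S W) {n : ℤ} (hn : n ∈ insert 1 S)
    (X : T) : Function.Bijective fun x : X ⟶ W => n • x := by
  rcases hn with rfl | hn
  · simp only [one_smul]
    exact Function.bijective_id
  · have := hW n hn
    convert ((asIso (n • 𝟙 W)).homToEquiv (Z := X)).bijective using 1
    ext x
    simp [Iso.homToEquiv]

instance [HasShift T ℤ] [∀ n : ℤ, (shiftFunctor T n).Additive] :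
    ObjectProperty.IsStableUnderShift (IsLocalObj (T := T) S) ℤ where
  isStableUnderShiftBy n := ⟨fun E hE s hs => by
    have := hE s hs
    rw [show s • 𝟙 (E⟦n⟧) = (s • 𝟙 E)⟦n⟧' by simp]
    infer_instance⟩

end LocalObjects

lemma exists_seq_frequently_eq (S : Set ℤ) :
    ∃ e : ℕ → ℤ, (∀ n, e n ∈ insert 1 S) ∧ ∀ s ∈ S, ∃ᶠ n in atTop, e n = s := by
  obtain ⟨f, hf⟩ := (Set.to_countable (insert 1 S)).exists_eq_range (Set.insert_nonempty 1 S)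
  refine ⟨fun n => f n.unpair.2, fun n => hf ▸ Set.mem_range_self _, fun s hs => ?_⟩
  obtain ⟨m, rfl⟩ := hf ▸ Set.mem_insert_of_mem 1 hs
  exact frequently_atTop.2 fun N => ⟨N.pair m, N.left_le_pair m, by simp⟩

section Generators

variable [Preadditive T] [HasZeroObject T] [HasShift T ℤ] [∀ n : ℤ, (shiftFunctor T n).Additive]
  [Pretriangulated T] [HasCoproducts.{v} T] (G₀ : Set T) (hcpt : ∀ g ∈ G₀, IsCompactObj g)
  (hgen : ∀ E : T, (∀ g ∈ G₀, ∀ n : ℤ, ∀ φ : g⟦n⟧ ⟶ E, φ = 0) → IsZero E)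
include hcpt hgen

lemma isIso_of_bijective_comp {X Y : T} (f : X ⟶ Y)
    (hf : ∀ A, IsCompactObj A → Function.Bijective fun x : A ⟶ X => x ≫ f) : IsIso f := by
  obtain ⟨Z, g, h, hT⟩ := distinguished_cocone_triangle f
  refine (Triangle.isZero₃_iff_isIso₁ _ hT).1 (hgen Z fun A hA n z => ?_)
  have hc := (hcpt A hA).shift n
  exact eq_zero_of_surjective_of_injective hT (hf _ hc).2
    (((shiftEquiv T 1).symm.toAdjunction.injective_comp_map_iff f).2 (hf _ (hc.shift (-1))).1) z

lemma exists_isLocal_hom (S : Set ℤ) (E : T) :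
    ∃ (L : T) (η : E ⟶ L), IsLocalObj S L ∧ ObjectProperty.isLocal (IsLocalObj S) η := by
  obtain ⟨e, he, hfreq⟩ := exists_seq_frequently_eq S
  obtain ⟨L, π, δ, hT⟩ := distinguished_cocone_triangle (Telescope.diffHom E e)
  refine ⟨L, Telescope.incl E 0 ≫ π, fun s hs => ?_,
    Telescope.isLocal_incl_zero_comp hT _ fun W hW n => hW.bijective_smul (he n) E⟩
  refine isIso_of_bijective_comp G₀ hcpt hgen _ fun A hA => ?_
  simpa [Preadditive.comp_zsmul] using Telescope.bijective_smul_of_isCompactObj hT hA (hfreq s hs)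

end Generators

/-- In a compactly generated triangulated category with small coproducts and `S ⊆ ℤ` a
multiplicatively closed set of integers: (a) the inclusion of the full subcategory of
`ℤ[S⁻¹]`-local objects admits a left adjoint, and (b) the inclusion of the full subcategory of
objects `F` with `Hom(F, E) = 0` for every `ℤ[S⁻¹]`-local `E` admits a right adjoint. -/
theorem stmt14 [Preadditive T] [HasZeroObject T] [HasShift T ℤ]
    [∀ n : ℤ, (shiftFunctor T n).Additive] [Pretriangulated T] [IsTriangulated T]
    [HasCoproducts.{v} T]
    (G₀ : Set T) (hcpt : ∀ g ∈ G₀, IsCompactObj g)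
    (hgen : ∀ E : T, (∀ g ∈ G₀, ∀ n : ℤ, ∀ φ : g⟦n⟧ ⟶ E, φ = 0) → IsZero E)
    (S : Set ℤ) (hS : ∀ a ∈ S, ∀ b ∈ S, a * b ∈ S) :
    (ObjectProperty.ι (IsLocalObj (T := T) S)).IsRightAdjoint ∧
    (ObjectProperty.ι
      (fun F : T => ∀ E : T, IsLocalObj S E → ∀ φ : F ⟶ E, φ = 0)).IsLeftAdjoint := by
  have hloc := exists_isLocal_hom G₀ hcpt hgen S
  have hQ : (fun F : T => ∀ E : T, IsLocalObj S E → ∀ φ : F ⟶ E, φ = 0) =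
      ObjectProperty.leftOrthogonal (IsLocalObj S) := by
    ext F
    exact ⟨fun h E φ hE => h E hE φ, fun h E hE φ => h φ hE⟩
  rw [hQ]
  set P : ObjectProperty T := IsLocalObj S
  refine ⟨P.isRightAdjoint_ι_of_isLocal hloc,
    P.leftOrthogonal.isLeftAdjoint_ι_of_isColocal fun E => ?_⟩
  obtain ⟨L, η, hL, hη⟩ := hloc E
  exact P.exists_isColocal_leftOrthogonal hL hη
end
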